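/- arXiv:1708.02088 — 2 statements merged into one kernel-verified Lean document; each statement's English description precedes it below -/
import Mathlib

section
/- Let Γ be a finite graph and v a vertex of Γ. The centralizer of v in the right-angled Artin group A(Γ) is the subgroup generated by the star of v, i.e., Z(v) = ⟨st_Γ(v)⟩. -/
open scoped commutatorElement

/-- The set of commutator relations of a right-angled Artin group on a graph. -/
def raagRels {α : Type*} (Γ : SimpleGraph α) : Set (FreeGroup α) :=
  {r | ∃ u v : α, Γ.Adj u v ∧ r = ⁅FreeGroup.of u, FreeGroup.of v⁆}

/-- The right-angled Artin group on the graph `Γ`. -/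
def Raag {α : Type*} (Γ : SimpleGraph α) : Type _ := PresentedGroup (raagRels Γ)

instance {α : Type*} (Γ : SimpleGraph α) : Group (Raag Γ) :=
  inferInstanceAs (Group (PresentedGroup (raagRels Γ)))

/-- The standard generator of `Raag Γ` corresponding to a vertex. -/
def Raag.of {α : Type*} (Γ : SimpleGraph α) (v : α) : Raag Γ := PresentedGroup.of v

/-- The commutation graph of a subset `X` of a group `G`. -/
def commGraph (G : Type*) [Group G] (X : Set G) : SimpleGraph X where
  Adj x y := x ≠ y ∧ Commute x.1 y.1
  symm := ⟨fun _ _ ⟨h1, h2⟩ => ⟨h1.symm, h2.symm⟩⟩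
  loopless := ⟨fun _ ⟨h1, _⟩ => h1 rfl⟩

/-- The natural homomorphism `A(CG(X)) → G` extending the identity on `X`. -/
def natHom (G : Type*) [Group G] (X : Set G) : Raag (commGraph G X) →* G :=
  PresentedGroup.toGroup (f := Subtype.val) (by
    rintro r ⟨u, v, hadj, rfl⟩
    rw [map_commutatorElement]
    simp only [FreeGroup.lift_apply_of]
    exact commutatorElement_eq_one_iff_commute.mpr hadj.2)

/-- The star of a vertex: vertices equal or adjacent to `v`. -/
def starSet {α : Type*} (Γ : SimpleGraph α) (v : α) : Set α := {w | w = v ∨ Γ.Adj v w}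

/-- The link of a vertex: vertices adjacent to `v`. -/
def linkSet {α : Type*} (Γ : SimpleGraph α) (v : α) : Set α := {w | Γ.Adj v w}

/-- The double of a graph `X` along the star of a vertex `v`:
two copies of the complement of the star, glued along the star. -/
def doubleStar {α : Type*} (X : SimpleGraph α) (v : α) :
    SimpleGraph ((Fin 2 × {w : α // w ∉ starSet X v}) ⊕ {w : α // w ∈ starSet X v}) where
  Adj a b :=
    match a, b with
    | .inl (i, x), .inl (j, y) => i = j ∧ X.Adj x.1 y.1
    | .inl (_, x), .inr y => X.Adj x.1 y.1
    | .inr x, .inl (_, y) => X.Adj x.1 y.1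
    | .inr x, .inr y => X.Adj x.1 y.1
  symm := by
    constructor
    rintro (⟨i, x⟩ | x) (⟨j, y⟩ | y) h
    · exact ⟨h.1.symm, h.2.symm⟩
    · exact h.symm
    · exact h.symm
    · exact h.symm
  loopless := by
    constructor
    rintro (⟨i, x⟩ | x) h
    · exact X.loopless.irrefl _ h.2
    · exact X.loopless.irrefl _ h

/-- The group element represented by a word (a list of letters with signs). -/
def wprod {α : Type*} (Γ : SimpleGraph α) (l : List (α × Bool)) : Raag Γ :=
  (l.map fun p => if p.2 then Raag.of Γ p.1 else (Raag.of Γ p.1)⁻¹).prod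

/-- The word length of an element of `Raag Γ` with respect to the vertex generators. -/
noncomputable def wordLength {α : Type*} (Γ : SimpleGraph α) (w : Raag Γ) : ℕ :=
  sInf {n | ∃ l : List (α × Bool), l.length = n ∧ wprod Γ l = w}

/-- A word is reduced if its length realizes the word length of the element it represents. -/
def WordReduced {α : Type*} (Γ : SimpleGraph α) (l : List (α × Bool)) : Prop :=
  l.length = wordLength Γ (wprod Γ l)

/-- The right-counting vector of a word: `rcv Γ l i` is the minimal word length of `y`
such that the suffix of `l` from position `i` equals `x * sᵢ^{eᵢ} * y` with `x` in the
subgroup generated by the link of `sᵢ`. -/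
noncomputable def rcv {α : Type*} (Γ : SimpleGraph α) (l : List (α × Bool))
    (i : Fin l.length) : ℕ :=
  sInf {m | ∃ x y : Raag Γ,
    x ∈ Subgroup.closure (Raag.of Γ '' linkSet Γ (l.get i).1) ∧
    wordLength Γ y = m ∧
    wprod Γ (l.drop i) = x * wprod Γ [l.get i] * y}

/-- The exponent used by the inflating map `σ` at position `i` of the word `l`. -/
noncomputable def sigmaExp {α : Type*} (Γ : SimpleGraph α) (M : ℕ) (l : List (α × Bool))
    (i : Fin l.length) : ℤ :=
  if (l.get i).2 then (4 : ℤ) ^ (M - 1 - rcv Γ l i)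
  else -2 * (4 : ℤ) ^ (M - 1 - rcv Γ l i)

/-- The inflating map `σ` applied to a word `l`, as an element of `Raag Γ`. -/
noncomputable def sigmaProd {α : Type*} (Γ : SimpleGraph α) (M : ℕ)
    (l : List (α × Bool)) : Raag Γ :=
  (List.ofFn fun i : Fin l.length => (Raag.of Γ (l.get i).1) ^ (sigmaExp Γ M l i)).prod

/-!
Deleting `v` exhibits `A(Γ)` as the HNN extension of `A(Γ - v)` along the subgroup generated by
the link of `v`, with stable letter `v` acting trivially on it. In an HNN extension whose
stable letter `t` acts trivially on the associated subgroup `A`, the centralizer of `t` is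
`⟨t⟩ ⊔ A`: write an element commuting with `t` as a reduced word `w`; by Britton's lemma
`t * w * t⁻¹` cannot be a reduced word two letters longer than `w`, so `w` begins with a syllable
`a t⁻¹` or ends with a syllable `t a` with `a ∈ A`, which can be peeled off.
-/
open HNNExtension HNNExtension.NormalWord Subgroup

namespace HNNExtension

variable {G : Type*} [Group G]

namespace NormalWord.ReducedWord

variable {A B : Subgroup G} {φ : A ≃* B}

theorem exists_prod_eq (g : HNNExtension G A B φ) : ∃ w : ReducedWord G A B, w.prod φ = g := by
  obtain ⟨d⟩ := TransversalPair.nonempty G A B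
  exact ⟨(g • NormalWord.empty (d := d)).toReducedWord, by simp⟩

theorem exists_prod_eq_of_toList_eq_cons (w : ReducedWord G A B) {x : ℤˣ × G}
    {l : List (ℤˣ × G)} (h : w.toList = x :: l) :
    ∃ w' : ReducedWord G A B, w'.toList = l ∧
      w.prod φ = of w.head * t ^ (x.1 : ℤ) * w'.prod φ :=
  ⟨⟨x.2, l, (h ▸ w.chain).tail⟩, rfl, by simp [ReducedWord.prod, h, mul_assoc]⟩

theorem exists_prod_eq_of_toList_eq_concat (w : ReducedWord G A B) {l : List (ℤˣ × G)}
    {x : ℤˣ × G} (h : w.toList = l ++ [x]) :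
    ∃ w' : ReducedWord G A B, w'.toList = l ∧
      w.prod φ = w'.prod φ * t ^ (x.1 : ℤ) * of x.2 :=
  ⟨⟨w.head, l, (List.isChain_append.mp (h ▸ w.chain)).1⟩, rfl,
    by simp [ReducedWord.prod, h, mul_assoc]⟩

end NormalWord.ReducedWord

variable {A : Subgroup G}

theorem toSubgroup_self (u : ℤˣ) : toSubgroup A A u = A := by
  rcases Int.units_eq_one_or u with rfl | rfl <;> rfl

theorem commute_of_t {a : G} (ha : a ∈ A) :
    Commute (of a : HNNExtension G A A (MulEquiv.refl A)) t :=
  (t_mul_of (φ := MulEquiv.refl A) ⟨a, ha⟩).symm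

namespace NormalWord.ReducedWord

theorem head_mem_or_getLast_mem_of_commute_t (w : ReducedWord G A A)
    (hw : Commute (w.prod (MulEquiv.refl A)) t) :
    (w.head ∈ A ∧ ∀ x ∈ w.toList.head?, x.1 = -1) ∨
      ∃ x ∈ w.toList.getLast?, x.1 = 1 ∧ x.2 ∈ A := by
  by_contra! h
  obtain ⟨hhead, hlast⟩ := h
  have hchain : ((1, w.head) :: (w.toList ++ [(-1, 1)])).IsChain
      fun a b : ℤˣ × G => a.2 ∈ toSubgroup A A a.1 → a.1 = b.1 := by
    refine List.isChain_cons.mpr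
      ⟨?_, List.isChain_append.mpr ⟨w.chain, List.isChain_singleton _, ?_⟩⟩
    · intro y hy hA
      obtain ⟨x, hx, hx1⟩ := hhead (by rwa [toSubgroup_self] at hA)
      rw [List.head?_append, hx, Option.some_or, Option.mem_some_iff] at hy
      exact hy ▸ ((Int.units_eq_one_or _).resolve_right hx1).symm
    · rintro x hx _ ⟨⟩ hxA
      rw [toSubgroup_self] at hxA
      exact (Int.units_eq_one_or _).resolve_left fun h => hlast x hx h hxA
  let w' : ReducedWord G A A := ⟨1, _, hchain⟩
  have hprod : w'.prod (MulEquiv.refl A) = w.prod (MulEquiv.refl A) := by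
    rw [show w'.prod (MulEquiv.refl A) = t * w.prod (MulEquiv.refl A) * t⁻¹ by
      simp [w', ReducedWord.prod, mul_assoc], hw.symm.eq, mul_inv_cancel_right]
  have := congrArg List.length (HNNExtension.ReducedWord.map_fst_eq_and_of_prod_eq _ hprod).1
  simp [w'] at this
  omega

theorem prod_mem_of_commute_t (w : ReducedWord G A A)
    (hw : Commute (w.prod (MulEquiv.refl A)) t) :
    w.prod (MulEquiv.refl A) ∈ zpowers t ⊔ A.map of := by
  set K : Subgroup (HNNExtension G A A (MulEquiv.refl A)) := zpowers t ⊔ A.map of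
  have ht : t ∈ K := mem_sup_left (mem_zpowers t)
  have hA {a : G} (ha : a ∈ A) : of a ∈ K := mem_sup_right (mem_map_of_mem of ha)
  rcases head_mem_or_getLast_mem_of_commute_t w hw with ⟨hhead, hfst⟩ | ⟨x, hx, hx1, hx2⟩
  · cases hL : w.toList with
    | nil => simpa [ReducedWord.prod, hL] using hA hhead
    | cons x l =>
      obtain ⟨w', rfl, hprod⟩ := exists_prod_eq_of_toList_eq_cons (φ := MulEquiv.refl A) w hL
      rw [hfst x (by simp [hL]), Units.val_neg, Units.val_one, zpow_neg, zpow_one] at hprod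
      have hw' : Commute (w'.prod (MulEquiv.refl A)) t := by
        rw [show w'.prod _ = t * (of w.head)⁻¹ * w.prod _ by rw [hprod]; group]
        exact ((Commute.refl t).mul_left (commute_of_t hhead).inv_left).mul_left hw
      have := prod_mem_of_commute_t w' hw'
      rw [hprod]
      exact mul_mem (mul_mem (hA hhead) (inv_mem ht)) this
  · obtain ⟨l, hL⟩ := List.getLast?_eq_some_iff.mp hx
    obtain ⟨w', rfl, hprod⟩ := exists_prod_eq_of_toList_eq_concat (φ := MulEquiv.refl A) w hL
    rw [hx1, Units.val_one, zpow_one] at hprod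
    have hw' : Commute (w'.prod (MulEquiv.refl A)) t := by
      rw [show w'.prod _ = w.prod _ * (of x.2)⁻¹ * t⁻¹ by rw [hprod]; group]
      exact (hw.mul_left (commute_of_t hx2).inv_left).mul_left (Commute.refl t).inv_left
    have := prod_mem_of_commute_t w' hw'
    rw [hprod]
    exact mul_mem (mul_mem this ht) (hA hx2)
termination_by w.toList.length
decreasing_by all_goals simp_all

end NormalWord.ReducedWord

theorem centralizer_t :
    centralizer {(t : HNNExtension G A A (MulEquiv.refl A))} = zpowers t ⊔ A.map of := by
  refine le_antisymm (fun g hg => ?_) (sup_le ?_ ?_)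
  · obtain ⟨w, rfl⟩ := ReducedWord.exists_prod_eq g
    exact ReducedWord.prod_mem_of_commute_t w (mem_centralizer_singleton_iff.mp hg)
  · exact zpowers_le.mpr (mem_centralizer_singleton_iff.mpr rfl)
  · rintro _ ⟨a, ha, rfl⟩
    exact mem_centralizer_singleton_iff.mpr (commute_of_t ha)

end HNNExtension

namespace Raag

variable {α : Type*} {Γ : SimpleGraph α}

theorem commute_of_adj {u w : α} (h : Γ.Adj u w) : Commute (Raag.of Γ u) (Raag.of Γ w) := by
  rw [← commutatorElement_eq_one_iff_commute]
  change PresentedGroup.mk _ ⁅FreeGroup.of u, FreeGroup.of w⁆ = 1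
  exact (QuotientGroup.eq_one_iff _).mpr (subset_normalClosure ⟨u, w, h, rfl⟩)

theorem closure_star_le_centralizer (v : α) :
    closure (Raag.of Γ '' starSet Γ v) ≤ centralizer {Raag.of Γ v} := by
  rw [closure_le]
  rintro _ ⟨w, rfl | hvw, rfl⟩
  · exact mem_centralizer_singleton_iff.mpr rfl
  · exact mem_centralizer_singleton_iff.mpr (commute_of_adj hvw).symm

variable {H : Type*} [Group H]

def lift (f : α → H) (hf : ∀ ⦃u w⦄, Γ.Adj u w → Commute (f u) (f w)) : Raag Γ →* H :=
  PresentedGroup.toGroup (rels := raagRels Γ) (f := f) <| by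
    rintro _ ⟨u, w, huw, rfl⟩
    rw [map_commutatorElement, FreeGroup.lift_apply_of, FreeGroup.lift_apply_of,
      commutatorElement_eq_one_iff_commute]
    exact hf huw

@[simp]
theorem lift_of (f : α → H) (hf : ∀ ⦃u w⦄, Γ.Adj u w → Commute (f u) (f w)) (v : α) :
    lift f hf (Raag.of Γ v) = f v :=
  PresentedGroup.toGroup.of _

theorem hom_ext {f g : Raag Γ →* H} (h : ∀ v, f (Raag.of Γ v) = g (Raag.of Γ v)) : f = g :=
  PresentedGroup.ext h

variable (Γ) in
def induceHom (s : Set α) : Raag (Γ.induce s) →* Raag Γ :=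
  lift (fun w => Raag.of Γ w.1) fun _ _ h => commute_of_adj h

theorem map_induceHom_closure (s t : Set α) (hts : t ⊆ s) :
    (closure (Raag.of (Γ.induce s) '' (Subtype.val ⁻¹' t))).map (induceHom Γ s) =
      closure (Raag.of Γ '' t) := by
  simp only [MonoidHom.map_closure, Set.image_image, induceHom, lift_of]
  rw [← Set.image_image (Raag.of Γ) Subtype.val, Subtype.image_preimage_coe,
    Set.inter_eq_right.mpr hts]

section VertexSplitting

variable (Γ) (v : α)

def linkSubgroup : Subgroup (Raag (Γ.induce {v}ᶜ)) :=
  closure (Raag.of _ '' (Subtype.val ⁻¹' linkSet Γ v))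

abbrev VertexHNN : Type _ :=
  HNNExtension (Raag (Γ.induce {v}ᶜ)) (linkSubgroup Γ v) (linkSubgroup Γ v) (MulEquiv.refl _)

theorem of_mem_linkSubgroup {w : α} (h : Γ.Adj v w) :
    Raag.of (Γ.induce {v}ᶜ) ⟨w, (Γ.ne_of_adj h).symm⟩ ∈ linkSubgroup Γ v :=
  subset_closure ⟨_, h, rfl⟩

open Classical in
noncomputable def toVertexHNN : Raag Γ →* VertexHNN Γ v :=
  lift (fun w => if h : w = v then t else HNNExtension.of (Raag.of _ ⟨w, h⟩)) <| by
    intro u w huw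
    by_cases hu : u = v
    · subst hu
      rw [dif_pos rfl, dif_neg (Γ.ne_of_adj huw).symm]
      exact (commute_of_t (of_mem_linkSubgroup Γ u huw)).symm
    by_cases hw : w = v
    · subst hw
      rw [dif_pos rfl, dif_neg hu]
      exact commute_of_t (of_mem_linkSubgroup Γ w huw.symm)
    rw [dif_neg hu, dif_neg hw]
    exact (commute_of_adj (Γ := Γ.induce {v}ᶜ) (u := ⟨u, hu⟩) (w := ⟨w, hw⟩) huw).map _

theorem map_induceHom_linkSubgroup :
    (linkSubgroup Γ v).map (induceHom Γ {v}ᶜ) = closure (Raag.of Γ '' linkSet Γ v) :=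
  map_induceHom_closure _ _ fun _ h => (Γ.ne_of_adj h).symm

noncomputable def ofVertexHNN : VertexHNN Γ v →* Raag Γ :=
  HNNExtension.lift (induceHom Γ {v}ᶜ) (Raag.of Γ v) fun a => by
    have : induceHom Γ {v}ᶜ a ∈ centralizer {Raag.of Γ v} :=
      closure_star_le_centralizer v <| closure_mono (Set.image_mono fun _ => Or.inr) <|
        map_induceHom_linkSubgroup Γ v ▸ mem_map_of_mem _ a.2
    exact (mem_centralizer_singleton_iff.mp this).symm

@[simp]
theorem ofVertexHNN_t : ofVertexHNN Γ v t = Raag.of Γ v :=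
  HNNExtension.lift_t _ _ _

@[simp]
theorem ofVertexHNN_of (g : Raag (Γ.induce {v}ᶜ)) :
    ofVertexHNN Γ v (HNNExtension.of g) = induceHom Γ {v}ᶜ g :=
  HNNExtension.lift_of _ _ _ _

@[simp]
theorem toVertexHNN_of_self : toVertexHNN Γ v (Raag.of Γ v) = t := by
  simp [toVertexHNN]

theorem ofVertexHNN_comp_toVertexHNN :
    (ofVertexHNN Γ v).comp (toVertexHNN Γ v) = MonoidHom.id _ :=
  hom_ext fun w => by
    by_cases h : w = v
    · subst h; simp
    · simp [toVertexHNN, h, induceHom]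

theorem ofVertexHNN_toVertexHNN (g : Raag Γ) : ofVertexHNN Γ v (toVertexHNN Γ v g) = g :=
  DFunLike.congr_fun (ofVertexHNN_comp_toVertexHNN Γ v) g

theorem map_ofVertexHNN_centralizer_t :
    (centralizer {t}).map (ofVertexHNN Γ v) = closure (Raag.of Γ '' starSet Γ v) := by
  have hcomp : (ofVertexHNN Γ v).comp HNNExtension.of = induceHom Γ {v}ᶜ :=
    MonoidHom.ext (ofVertexHNN_of Γ v)
  have hstar : starSet Γ v = {v} ∪ linkSet Γ v := rfl
  rw [HNNExtension.centralizer_t, Subgroup.map_sup, MonoidHom.map_zpowers, map_map, hcomp,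
    ofVertexHNN_t, map_induceHom_linkSubgroup, hstar, Set.image_union, Set.image_singleton,
    Subgroup.closure_union, zpowers_eq_closure]

end VertexSplitting

end Raag

theorem centralizer_eq_closure_star_general {V : Type*} (Γ : SimpleGraph V) (v : V) :
    Subgroup.centralizer {Raag.of Γ v} =
      Subgroup.closure (Raag.of Γ '' starSet Γ v) := by
  refine le_antisymm (fun g hg => ?_) (Raag.closure_star_le_centralizer v)
  rw [← Raag.map_ofVertexHNN_centralizer_t, ← Raag.ofVertexHNN_toVertexHNN Γ v g]
  have : Commute (Raag.toVertexHNN Γ v g) t := by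
    simpa using Commute.map (mem_centralizer_singleton_iff.mp hg) (Raag.toVertexHNN Γ v)
  exact mem_map_of_mem _ (mem_centralizer_singleton_iff.mpr this)

/-- the centralizer of a generator `v` in `A(Γ)` is the subgroup generated
by the star of `v`. -/
theorem centralizer_eq_closure_star {V : Type*} [Fintype V] (Γ : SimpleGraph V) (v : V) :
    Subgroup.centralizer {Raag.of Γ v} =
      Subgroup.closure (Raag.of Γ '' starSet Γ v) :=
  centralizer_eq_closure_star_general Γ v
end

section
/- Let Γ be a finite graph and let x, y ∈ A(Γ) be elements of the form x = (u^g)^k and y = (u^h)^m for some vertex u ∈ V(Γ), elements g, h ∈ A(Γ), and nonzero integers k, m. If x^m = y^k in A(Γ), and if x and y both lie in a subset U ⊆ A(Γ) for which the natural map A(CG(U)) → ⟨U⟩ is an isomorphism, then x = y. -/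
open scoped commutatorElement

/-!
Pull `x ^ m = y ^ k` back along the injective map `A(CG(U)) → ⟨U⟩`: it becomes an equation
between powers of the generators `x` and `y` of `A(CG(U))`. If `x ≠ y`, the homomorphism
`A(CG(U)) → ℤ` counting the exponent of `x` sends the two sides to `m ≠ 0` and `0`.
-/

section

variable {α : Type*} (Γ : SimpleGraph α)

/-- The exponent sum of the generator `v`, well defined because `ℤ` is abelian. -/
def Raag.expSum [DecidableEq α] (v : α) : Raag Γ →* Multiplicative ℤ :=
  PresentedGroup.toGroup (f := fun w => if w = v then Multiplicative.ofAdd 1 else 1) (by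
    rintro r ⟨a, b, -, rfl⟩
    rw [map_commutatorElement]
    exact commutatorElement_eq_one_iff_commute.mpr (Commute.all _ _))

theorem Raag.expSum_of [DecidableEq α] (v w : α) :
    Raag.expSum Γ v (Raag.of Γ w) = if w = v then Multiplicative.ofAdd 1 else 1 :=
  PresentedGroup.toGroup.of _

variable {Γ}

theorem Raag.eq_of_zpow_of_eq_zpow_of {a b : α} {m k : ℤ} (hm : m ≠ 0)
    (h : Raag.of Γ a ^ m = Raag.of Γ b ^ k) : a = b := by
  classical
  by_contra hab
  have hsum := congrArg (expSum Γ a) h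
  rw [map_zpow, map_zpow, expSum_of, expSum_of, if_pos rfl, if_neg (Ne.symm hab),
    one_zpow] at hsum
  exact hm (by simpa using congrArg Multiplicative.toAdd hsum)

end

theorem natHom_of (G : Type*) [Group G] (X : Set G) (x : X) :
    natHom G X (Raag.of (commGraph G X) x) = x :=
  PresentedGroup.toGroup.of _

theorem eq_of_pow_eq_general {V : Type*} (Γ : SimpleGraph V)
    (U : Set (Raag Γ))
    (hinj : Function.Injective (natHom (Raag Γ) U))
    (k m : ℤ) (hm : m ≠ 0)
    (x y : Raag Γ)
    (hxU : x ∈ U) (hyU : y ∈ U)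
    (hpow : x ^ m = y ^ k) : x = y := by
  have hgen : Raag.of (commGraph (Raag Γ) U) ⟨x, hxU⟩ ^ m
      = Raag.of (commGraph (Raag Γ) U) ⟨y, hyU⟩ ^ k :=
    hinj (by rw [map_zpow, map_zpow, natHom_of, natHom_of, hpow])
  exact congrArg Subtype.val (Raag.eq_of_zpow_of_eq_zpow_of hm hgen)

/-- if `x = (u^g)^k`, `y = (u^h)^m` with `k, m ≠ 0`, `x^m = y^k`, and both
`x, y` lie in a subset `U` whose natural map `A(CG(U)) → ⟨U⟩` is an isomorphism,
then `x = y`. -/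
theorem eq_of_pow_eq {V : Type*} [Fintype V] (Γ : SimpleGraph V)
    (U : Set (Raag Γ))
    (hinj : Function.Injective (natHom (Raag Γ) U))
    (hrange : (natHom (Raag Γ) U).range = Subgroup.closure U)
    (u : V) (g h : Raag Γ) (k m : ℤ) (hk : k ≠ 0) (hm : m ≠ 0)
    (x y : Raag Γ)
    (hx : x = (g⁻¹ * Raag.of Γ u * g) ^ k)
    (hy : y = (h⁻¹ * Raag.of Γ u * h) ^ m)
    (hxU : x ∈ U) (hyU : y ∈ U)
    (hpow : x ^ m = y ^ k) : x = y :=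
  eq_of_pow_eq_general Γ U hinj k m hm x y hxU hyU hpow
end
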